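/- Composition of conditional probability ratios: let (z_1,...,z_T) and (z'_1,...,z'_T) be two sequences of random variables whose joint laws agree on all conditionals except the t-th, and suppose the t-th conditionals satisfy P[z_t ∈ U | z_{1:t−1} ∈ U^{1:t−1}] ≤ e^ε · P[z'_t ∈ U | z'_{1:t−1} ∈ U^{1:t−1}] for all measurable U and measurable prefix events U^{1:t−1}. Then for any product measurable set U^{1:T}, P[z_{1:T} ∈ U^{1:T}] ≤ e^ε · P[z'_{1:T} ∈ U^{1:T}]. -/

import Mathlib

open MeasureTheory
open scoped ENNReal

/-! Chain rule: with `A ⊆ B ⊆ C` the events "whole sequence in `U`", "prefix up to `t` in `U`"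
and "prefix before `t` in `U`", `P(A) = P(A | B) · P(B | C) · P(C)`. The first and last factors
agree for `z` and `z'`, and the middle one grows by at most `e^ε`. In `ℝ≥0∞` the factorisation
holds without any positivity assumption, since `0 / 0 = 0`. -/

namespace ENNReal

theorem eq_div_mul_div_mul {a b c : ℝ≥0∞} (hab : a ≤ b) (hbc : b ≤ c) (hc : c ≠ ⊤) :
    a = a / b * (b / c) * c := by
  rcases eq_or_ne b 0 with rfl | hb
  · simp [nonpos_iff_eq_zero.mp hab]
  have hc0 : c ≠ 0 := ((pos_iff_ne_zero.mpr hb).trans_le hbc).ne'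
  rw [mul_assoc, ENNReal.div_mul_cancel hc0 hc,
    ENNReal.div_mul_cancel hb (ne_top_of_le_ne_top hc hbc)]

theorem le_mul_of_div_eq_of_div_le {a b c a' b' c' e : ℝ≥0∞}
    (hab : a ≤ b) (hbc : b ≤ c) (hc : c ≠ ⊤) (hab' : a' ≤ b') (hbc' : b' ≤ c')
    (hsuf : a / b = a' / b') (hstep : b / c ≤ e * (b' / c')) (hpre : c = c') :
    a ≤ e * a' := by
  subst hpre
  calc a = a / b * (b / c) * c := eq_div_mul_div_mul hab hbc hc
    _ ≤ a' / b' * (e * (b' / c)) * c := by rw [hsuf]; gcongr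
    _ = e * (a' / b' * (b' / c) * c) := by ring
    _ = e * a' := by rw [← eq_div_mul_div_mul hab' hbc' hc]

end ENNReal

namespace MeasureTheory

theorem measure_le_mul_of_cond_ratios {Ω : Type*} [MeasurableSpace Ω] (μ : Measure Ω)
    [IsFiniteMeasure μ] {A B C A' B' C' : Set Ω} {e : ℝ≥0∞}
    (hAB : A ⊆ B) (hBC : B ⊆ C) (hAB' : A' ⊆ B') (hBC' : B' ⊆ C')
    (hsuf : μ A / μ B = μ A' / μ B') (hstep : μ B / μ C ≤ e * (μ B' / μ C'))
    (hpre : μ C = μ C') :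
    μ A ≤ e * μ A' :=
  ENNReal.le_mul_of_div_eq_of_div_le (measure_mono hAB) (measure_mono hBC) (measure_ne_top μ C)
    (measure_mono hAB') (measure_mono hBC') hsuf hstep hpre

end MeasureTheory

theorem conditional_ratio_composition_general {Ω Z : Type*} [MeasurableSpace Ω]
    (μ : Measure Ω) [IsProbabilityMeasure μ]
    (T : ℕ) (t : Fin T) (ε : ℝ)
    (z z' : Fin T → Ω → Z)
    (hpre : ∀ U : Fin T → Set Z,
      μ {ω | ∀ i : Fin T, i < t → z i ω ∈ U i}
        = μ {ω | ∀ i : Fin T, i < t → z' i ω ∈ U i})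
    (hstep : ∀ U : Fin T → Set Z,
      μ {ω | ∀ i : Fin T, i ≤ t → z i ω ∈ U i} / μ {ω | ∀ i : Fin T, i < t → z i ω ∈ U i}
        ≤ ENNReal.ofReal (Real.exp ε) *
          (μ {ω | ∀ i : Fin T, i ≤ t → z' i ω ∈ U i}
            / μ {ω | ∀ i : Fin T, i < t → z' i ω ∈ U i}))
    (hsuf : ∀ U : Fin T → Set Z,
      μ {ω | ∀ i : Fin T, z i ω ∈ U i} / μ {ω | ∀ i : Fin T, i ≤ t → z i ω ∈ U i}
        = μ {ω | ∀ i : Fin T, z' i ω ∈ U i}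
            / μ {ω | ∀ i : Fin T, i ≤ t → z' i ω ∈ U i}) :
    ∀ U : Fin T → Set Z,
      μ {ω | ∀ i : Fin T, z i ω ∈ U i}
        ≤ ENNReal.ofReal (Real.exp ε) * μ {ω | ∀ i : Fin T, z' i ω ∈ U i} := by
  intro U
  have hall_sub (x : Fin T → Ω → Z) :
      {ω | ∀ i, x i ω ∈ U i} ⊆ {ω | ∀ i, i ≤ t → x i ω ∈ U i} :=
    fun _ h i _ => h i
  have hle_sub (x : Fin T → Ω → Z) :
      {ω | ∀ i, i ≤ t → x i ω ∈ U i} ⊆ {ω | ∀ i, i < t → x i ω ∈ U i} :=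
    fun _ h i hi => h i hi.le
  exact measure_le_mul_of_cond_ratios μ (hall_sub z) (hle_sub z) (hall_sub z') (hle_sub z')
    (hsuf U) (hstep U) (hpre U)

/-- Chain-rule composition of conditional probability ratios: if two output sequences have
the same prefix laws and the same suffix conditionals, and the `t`-th conditionals differ
by a factor at most `e^ε`, then the joint cylinder probabilities differ by at most `e^ε`. -/
theorem conditional_ratio_composition {Ω Z : Type*} [MeasurableSpace Ω]
    (μ : Measure Ω) [IsProbabilityMeasure μ]
    (T : ℕ) (t : Fin T) (ε : ℝ) (hε : 0 ≤ ε)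
    (z z' : Fin T → Ω → Z)
    (hpre : ∀ U : Fin T → Set Z,
      μ {ω | ∀ i : Fin T, i < t → z i ω ∈ U i}
        = μ {ω | ∀ i : Fin T, i < t → z' i ω ∈ U i})
    (hstep : ∀ U : Fin T → Set Z,
      μ {ω | ∀ i : Fin T, i ≤ t → z i ω ∈ U i} / μ {ω | ∀ i : Fin T, i < t → z i ω ∈ U i}
        ≤ ENNReal.ofReal (Real.exp ε) *
          (μ {ω | ∀ i : Fin T, i ≤ t → z' i ω ∈ U i}
            / μ {ω | ∀ i : Fin T, i < t → z' i ω ∈ U i}))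
    (hsuf : ∀ U : Fin T → Set Z,
      μ {ω | ∀ i : Fin T, z i ω ∈ U i} / μ {ω | ∀ i : Fin T, i ≤ t → z i ω ∈ U i}
        = μ {ω | ∀ i : Fin T, z' i ω ∈ U i}
            / μ {ω | ∀ i : Fin T, i ≤ t → z' i ω ∈ U i}) :
    ∀ U : Fin T → Set Z,
      μ {ω | ∀ i : Fin T, z i ω ∈ U i}
        ≤ ENNReal.ofReal (Real.exp ε) * μ {ω | ∀ i : Fin T, z' i ω ∈ U i} :=
  conditional_ratio_composition_general μ T t ε z z' hpre hstep hsuf
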